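/- For every p ≥ 1 and all ζ, α, η, β ∈ Z₂^p with η·α + ζ·β = 1 in ZMod 2, conjugation by the s-rotation with angle π/2 flips the sign of the spinor: (R^ζ_α(π/2))^† · ((−i)^{ν(η,β)} S^η_β) · R^ζ_α(π/2) = −(−i)^{ν(η,β)} S^η_β, where ^† denotes conjugate transpose. -/

import Mathlib

open Matrix

/-- `Z₂^p`, the binary strings of length `p`. -/
abbrev Z2 (p : ℕ) : Type := Fin p → ZMod 2

/-- Inner product of two binary strings, valued in `ZMod 2`. -/
def dotp {p : ℕ} (ζ γ : Z2 p) : ZMod 2 := ∑ i, ζ i * γ i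

/-- `(-1)^x` for `x : ZMod 2`, as a complex number. -/
noncomputable def sgn (x : ZMod 2) : ℂ := if x = 0 then 1 else -1

/-- The spinor `S^ζ_α`: the `2^p × 2^p` complex matrix with `(γ, β)` entry
`(-1)^{ζ·γ}` if `γ = β + α` and `0` otherwise. -/
noncomputable def Spinor {p : ℕ} (ζ α : Z2 p) : Matrix (Z2 p) (Z2 p) ℂ :=
  Matrix.of fun γ β => if γ = β + α then sgn (dotp ζ γ) else 0

/-- `ν(ζ,α)`: the number of indices `i` with `ζ i = 1` and `α i = 1`. -/
def nu {p : ℕ} (ζ α : Z2 p) : ℕ :=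
  (Finset.univ.filter fun i => ζ i = 1 ∧ α i = 1).card

/-- The s-rotation `R^ζ_α(θ) = exp(iθ (-i)^{ν(ζ,α)} S^ζ_α)`. -/
noncomputable def sRot {p : ℕ} (ζ α : Z2 p) (θ : ℝ) : Matrix (Z2 p) (Z2 p) ℂ :=
  NormedSpace.exp ((Complex.I * θ * (-Complex.I) ^ nu ζ α) • Spinor ζ α)

/-!
Write `P = (-i)^{ν(ζ,α)} S^ζ_α` and `Q = (-i)^{ν(η,β)} S^η_β`. Spinors multiply as
`S^ζ_α S^η_β = (-1)^{η·α} S^{ζ+η}_{α+β}`, and `ζ·α ≡ ν(ζ,α) mod 2`; the phase therefore makes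
`P` a Hermitian involution, and `η·α + ζ·β = 1` makes `P` and `Q` anticommute. For an involution the
exponential series splits into `exp(iθP) = cos θ + i sin θ P`, so `R^ζ_α(π/2) = iP` and
`(iP)† Q (iP) = P Q P = -Q P P = -Q`.
-/

open Complex

lemma ZModModule.eq_add_iff_eq_add {G : Type*} [AddCommGroup G] [Module (ZMod 2) G] {a b c : G} :
    a = b + c ↔ b = a + c := by
  rw [← ZModModule.sub_eq_add, eq_sub_iff_add_eq, eq_comm]

theorem NormedSpace.exp_mul_I_smul_of_mul_self_eq_one {R : Type*} [Ring R] [Algebra ℂ R]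
    [TopologicalSpace R] [IsTopologicalRing R] [ContinuousSMul ℂ R] [T2Space R] {a : R}
    (ha : a * a = 1) (x : ℂ) :
    NormedSpace.exp ((x * I) • a) = cos x • 1 + (sin x * I) • a := by
  have ha_even (k : ℕ) : a ^ (2 * k) = 1 := by rw [pow_mul, sq, ha, one_pow]
  rw [NormedSpace.exp_eq_tsum ℂ]
  refine HasSum.tsum_eq (HasSum.even_add_odd ?_ ?_)
  · convert (hasSum_cos' x).smul_const (1 : R) using 2 with k
    rw [smul_pow, ha_even, smul_smul, div_eq_inv_mul]
  · convert ((hasSum_sin' x).mul_right I).smul_const a using 2 with k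
    rw [smul_pow, pow_succ a, ha_even, one_mul, smul_smul, div_mul_cancel₀ _ I_ne_zero,
      div_eq_inv_mul]

theorem star_I_smul_mul_mul_I_smul_of_anticommute {R : Type*} [Ring R] [StarRing R] [Algebra ℂ R]
    [StarModule ℂ R] {a b : R} (ha : IsSelfAdjoint a) (haa : a * a = 1) (hab : a * b = -(b * a)) :
    star (I • a) * b * (I • a) = -b := by
  calc star (I • a) * b * (I • a) = (-I * I) • (a * b * a) := by
        rw [star_smul, ha.star_eq, star_def, conj_I, smul_mul_assoc, smul_mul_assoc,
          mul_smul_comm, smul_smul]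
    _ = -b := by rw [neg_mul, I_mul_I, neg_neg, one_smul, hab, neg_mul, mul_assoc, haa, mul_one]

lemma sgn_natCast (n : ℕ) : sgn n = (-1) ^ n := by
  unfold sgn
  split_ifs with h
  · exact ((ZMod.natCast_eq_zero_iff_even).mp h).neg_one_pow.symm
  · exact ((ZMod.natCast_ne_zero_iff_odd).mp h).neg_one_pow.symm

lemma sgn_add (x y : ZMod 2) : sgn (x + y) = sgn x * sgn y := by
  rw [← ZMod.natCast_zmod_val x, ← ZMod.natCast_zmod_val y, ← Nat.cast_add, sgn_natCast,
    sgn_natCast, sgn_natCast, pow_add]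

lemma sgn_add_one (x : ZMod 2) : sgn (x + 1) = -sgn x := by
  rw [sgn_add, ← Nat.cast_one, sgn_natCast, pow_one, mul_neg_one]

lemma star_sgn (x : ZMod 2) : star (sgn x) = sgn x := by
  unfold sgn; split_ifs <;> simp

section

variable {p : ℕ}

lemma dotp_add_left (ζ η γ : Z2 p) : dotp (ζ + η) γ = dotp ζ γ + dotp η γ :=
  add_dotProduct ζ η γ

lemma dotp_add_right (ζ γ δ : Z2 p) : dotp ζ (γ + δ) = dotp ζ γ + dotp ζ δ :=
  dotProduct_add ζ γ δ

lemma dotp_eq_nu (ζ α : Z2 p) : dotp ζ α = nu ζ α := by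
  rw [dotp, nu, Finset.card_filter, Nat.cast_sum]
  refine Finset.sum_congr rfl fun i _ => ?_
  push_cast
  generalize ζ i = a, α i = b
  revert a b
  decide

lemma Spinor_mul (ζ α η β : Z2 p) :
    Spinor ζ α * Spinor η β = sgn (dotp η α) • Spinor (ζ + η) (α + β) := by
  ext γ δ
  simp only [Spinor, mul_apply, of_apply, Matrix.smul_apply, mul_ite, ite_mul, zero_mul,
    mul_zero, Finset.sum_ite_eq', Finset.mem_univ, if_true, smul_ite, smul_zero,
    show δ + β + α = δ + (α + β) by abel]
  split_ifs with hγ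
  · have hδβ : δ + β = γ + α := ZModModule.eq_add_iff_eq_add.mp (by rw [hγ]; abel)
    rw [hδβ, dotp_add_left, dotp_add_right, sgn_add, sgn_add, smul_eq_mul]
    ring
  · rfl

lemma Spinor_zero_zero : Spinor (0 : Z2 p) 0 = 1 := by
  ext γ δ
  simp [Spinor, one_apply, dotp, sgn]

lemma Spinor_conjTranspose (ζ α : Z2 p) :
    (Spinor ζ α)ᴴ = sgn (dotp ζ α) • Spinor ζ α := by
  ext γ δ
  simp only [conjTranspose_apply, Spinor, of_apply, Matrix.smul_apply, smul_ite, smul_zero,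
    apply_ite star, star_zero, star_sgn, ZModModule.eq_add_iff_eq_add (a := γ)]
  split_ifs with h
  · rw [h, dotp_add_right, sgn_add, smul_eq_mul, mul_comm]
  · rfl

noncomputable def phasedSpinor (ζ α : Z2 p) : Matrix (Z2 p) (Z2 p) ℂ :=
  (-I) ^ nu ζ α • Spinor ζ α

lemma phasedSpinor_mul_self (ζ α : Z2 p) : phasedSpinor ζ α * phasedSpinor ζ α = 1 := by
  rw [phasedSpinor, smul_mul_smul_comm, Spinor_mul, ZModModule.add_self, ZModModule.add_self,
    Spinor_zero_zero, smul_smul, dotp_eq_nu, sgn_natCast, ← mul_pow, ← mul_pow]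
  simp

lemma phasedSpinor_isHermitian (ζ α : Z2 p) : (phasedSpinor ζ α).IsHermitian := by
  rw [IsHermitian, phasedSpinor, conjTranspose_smul, Spinor_conjTranspose, smul_smul, dotp_eq_nu,
    sgn_natCast, star_pow, ← mul_pow]
  simp

lemma phasedSpinor_anticommute {ζ α η β : Z2 p} (h : dotp η α + dotp ζ β = 1) :
    phasedSpinor ζ α * phasedSpinor η β = -(phasedSpinor η β * phasedSpinor ζ α) := by
  have hsgn : sgn (dotp η α) = -sgn (dotp ζ β) := by
    rw [eq_sub_of_add_eq h, ZModModule.sub_eq_add, add_comm, sgn_add_one]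
  simp only [phasedSpinor, smul_mul_smul_comm, Spinor_mul, hsgn, add_comm η ζ, add_comm β α,
    mul_comm ((-I) ^ nu η β), neg_smul, smul_neg]

lemma sRot_eq_exp (ζ α : Z2 p) (θ : ℝ) :
    sRot ζ α θ = NormedSpace.exp (((θ : ℂ) * I) • phasedSpinor ζ α) := by
  rw [sRot, phasedSpinor, smul_smul, mul_comm I]

lemma sRot_pi_div_two (ζ α : Z2 p) : sRot ζ α (Real.pi / 2) = I • phasedSpinor ζ α := by
  rw [sRot_eq_exp, NormedSpace.exp_mul_I_smul_of_mul_self_eq_one (phasedSpinor_mul_self ζ α),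
    ← ofReal_cos, ← ofReal_sin, Real.cos_pi_div_two, Real.sin_pi_div_two]
  simp

end

theorem sRot_conj_flip_general {p : ℕ} (ζ α η β : Z2 p)
    (h : dotp η α + dotp ζ β = 1) :
    (sRot ζ α (Real.pi / 2))ᴴ * ((-Complex.I) ^ nu η β • Spinor η β) *
        sRot ζ α (Real.pi / 2) =
      -((-Complex.I) ^ nu η β • Spinor η β) := by
  rw [sRot_pi_div_two, ← star_eq_conjTranspose]
  exact star_I_smul_mul_mul_I_smul_of_anticommute (phasedSpinor_isHermitian ζ α).isSelfAdjoint
    (phasedSpinor_mul_self ζ α) (phasedSpinor_anticommute h)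

/-- If `η·α + ζ·β = 1`, conjugation by the s-rotation with angle `π/2` flips the sign. -/
theorem sRot_conj_flip {p : ℕ} (hp : 1 ≤ p) (ζ α η β : Z2 p)
    (h : dotp η α + dotp ζ β = 1) :
    (sRot ζ α (Real.pi / 2))ᴴ * ((-Complex.I) ^ nu η β • Spinor η β) *
        sRot ζ α (Real.pi / 2) =
      -((-Complex.I) ^ nu η β • Spinor η β) :=
  sRot_conj_flip_general ζ α η β h
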